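/- If A and Z are trace-free symmetric linear operators on a 3-dimensional real inner product space, then |tr(A ∘ Z²)| ≤ (1/√6)·‖A‖·‖Z‖², where ‖·‖ denotes the Hilbert–Schmidt norm. -/
import Mathlib
open Matrix

/-- If `A` and `Z` are trace-free symmetric operators on a 3-dimensional real
inner product space (represented as symmetric `3 × 3` real matrices), then
`|tr (A ∘ Z²)| ≤ (1/√6) ‖A‖ ‖Z‖²` in the Hilbert–Schmidt norm
(`‖A‖ = √(tr A²)`, and `‖Z‖² = tr Z²`). -/
theorem stmt_1 (A Z : Matrix (Fin 3) (Fin 3) ℝ)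
    (hA : Aᵀ = A) (hZ : Zᵀ = Z)
    (htA : A.trace = 0) (htZ : Z.trace = 0) :
    |(A * Z * Z).trace| ≤
      (1 / Real.sqrt 6) * Real.sqrt (A * A).trace * (Z * Z).trace := by
  have hsZ : ∀ i j, Z j i = Z i j := fun i j => congrFun (congrFun hZ i) j
  have hsA : ∀ i j, A j i = A i j := fun i j => congrFun (congrFun hA i) j
  set t : ℝ := (Z * Z).trace with ht
  set a2 : ℝ := (A * A).trace with ha2
  set W : Matrix (Fin 3) (Fin 3) ℝ := Z * Z - (t/3) • 1 with hW
  -- key identity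
  have key : (Z * Z * Z * Z).trace = t^2 / 2 := by
    have h22 : Z 2 2 = -(Z 0 0) - Z 1 1 := by
      have := htZ
      simp [Matrix.trace, Fin.sum_univ_three, Matrix.diag] at this
      linarith
    rw [ht]
    simp only [Matrix.trace, Matrix.mul_apply, Fin.sum_univ_three, Matrix.diag]
    rw [hsZ 0 1, hsZ 0 2, hsZ 1 2, h22]
    ring
  -- W symmetric
  have hZZt : (Z * Z)ᵀ = Z * Z := by rw [Matrix.transpose_mul, hZ]
  have hsW : ∀ i j, W j i = W i j := by
    intro i j
    have h1 : (Z*Z) j i = (Z*Z) i j := congrFun (congrFun hZZt i) j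
    simp [hW, Matrix.sub_apply, Matrix.smul_apply, Matrix.one_apply, h1, eq_comm]
  -- tr(A Z²) = tr(A W)
  have hP : (A * Z * Z).trace = (A * W).trace := by
    rw [hW, Matrix.mul_sub, Matrix.trace_sub, Matrix.mul_smul, Matrix.mul_one,
      Matrix.trace_smul, htA, Matrix.mul_assoc]
    simp
  -- tr(W²) = t²/6
  have hWW : (W * W).trace = t^2 / 6 := by
    have expand : W * W = Z * Z * Z * Z - (2*t/3) • (Z * Z) + (t^2/9) • 1 := by
      rw [hW]
      simp only [Matrix.sub_mul, Matrix.mul_sub, Matrix.smul_mul, Matrix.mul_smul,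
        Matrix.one_mul, Matrix.mul_one, smul_smul, ← Matrix.mul_assoc]
      module
    rw [expand, Matrix.trace_add, Matrix.trace_sub, Matrix.trace_smul, Matrix.trace_smul,
      Matrix.trace_one, key, ← ht]
    simp
    ring
  -- sum representations
  have hPsum : (A * W).trace = ∑ p : Fin 3 × Fin 3, A p.1 p.2 * W p.2 p.1 := by
    rw [Fintype.sum_prod_type]
    simp [Matrix.trace, Matrix.mul_apply, Matrix.diag]
  have hA2sum : a2 = ∑ p : Fin 3 × Fin 3, (A p.1 p.2)^2 := by
    rw [ha2, Fintype.sum_prod_type]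
    simp only [Matrix.trace, Matrix.mul_apply, Matrix.diag, sq]
    exact Finset.sum_congr rfl fun i _ => Finset.sum_congr rfl fun j _ => by rw [hsA i j]
  have hW2sum : (W * W).trace = ∑ p : Fin 3 × Fin 3, (W p.2 p.1)^2 := by
    rw [Fintype.sum_prod_type]
    simp only [Matrix.trace, Matrix.mul_apply, Matrix.diag, sq]
    exact Finset.sum_congr rfl fun i _ => Finset.sum_congr rfl fun j _ => by rw [hsW i j]
  -- Cauchy-Schwarz
  have hCS := Finset.sum_mul_sq_le_sq_mul_sq Finset.univ
    (fun p : Fin 3 × Fin 3 => A p.1 p.2) (fun p => W p.2 p.1)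
  have hsq : ((A * Z * Z).trace)^2 ≤ a2 * (t^2 / 6) := by
    rw [hP, hPsum, hA2sum, ← hWW, hW2sum]
    exact hCS
  -- positivity
  have ht0 : 0 ≤ t := by
    have : t = ∑ p : Fin 3 × Fin 3, (Z p.1 p.2)^2 := by
      rw [ht, Fintype.sum_prod_type]
      simp only [Matrix.trace, Matrix.mul_apply, Matrix.diag, sq]
      exact Finset.sum_congr rfl fun i _ => Finset.sum_congr rfl fun j _ => by rw [hsZ i j]
    rw [this]
    positivity
  have ha20 : 0 ≤ a2 := by
    rw [hA2sum]; positivity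
  -- conclude
  have h1 : |(A * Z * Z).trace| ≤ Real.sqrt (a2 * (t^2 / 6)) := by
    rw [← Real.sqrt_sq_eq_abs]
    exact Real.sqrt_le_sqrt hsq
  refine h1.trans (le_of_eq ?_)
  have h6 : (0:ℝ) < Real.sqrt 6 := Real.sqrt_pos.mpr (by norm_num)
  rw [Real.sqrt_mul ha20, Real.sqrt_div (by positivity : (0:ℝ) ≤ t^2),
    Real.sqrt_sq ht0]
  field_simp
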